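/- The partition function of weighted Schröder paths admits the summation formula $Z_{(i,0)\to(0,j)} = \sum_{k=0}^{\min(i,j)} \gamma^k q^{k^2} \begin{bmatrix} i+j-k \\ j-k, k, i-k \end{bmatrix}_{q^2}$, where $\begin{bmatrix} a+b+c \\ a,b,c \end{bmatrix}_{q^2} = \frac{\prod_{s=1}^{a+b+c}(q^{2s}-1)}{\prod_{s=1}^{a}(q^{2s}-1)\prod_{s=1}^{b}(q^{2s}-1)\prod_{s=1}^{c}(q^{2s}-1)}$ is the $q^2$-trinomial coefficient. -/

import Mathlib

/-- A step of a Schröder path: up `(0,1)`, left `(-1,0)`, or diagonal `(-1,1)`. -/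
inductive SStep
  | up
  | left
  | diag
deriving DecidableEq

instance : Fintype SStep :=
  ⟨{SStep.up, SStep.left, SStep.diag}, by intro s; cases s <;> decide⟩

/-- The result of taking a step from a given position. -/
def stepMove : ℤ × ℤ → SStep → ℤ × ℤ
  | (x, y), SStep.up => (x, y + 1)
  | (x, y), SStep.left => (x - 1, y)
  | (x, y), SStep.diag => (x - 1, y + 1)

/-- Endpoint of a walk starting at `p` and taking the steps in the list. -/
def endPos : ℤ × ℤ → List SStep → ℤ × ℤ
  | p, [] => p
  | p, s :: rest => endPos (stepMove p s) rest

/-- The area to the left of the path, `∑ (x_s + x_{s+1}) (y_{s+1} - y_s)`: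
an up step from `(x,y)` contributes `2x`, a diagonal step `2x - 1`, a left step `0`. -/
def areaOf : ℤ × ℤ → List SStep → ℤ
  | _, [] => 0
  | (x, y), SStep.up :: rest => 2 * x + areaOf (x, y + 1) rest
  | (x, y), SStep.left :: rest => areaOf (x - 1, y) rest
  | (x, y), SStep.diag :: rest => (2 * x - 1) + areaOf (x - 1, y + 1) rest

/-- All lists of steps of length `n`. -/
def allLists : ℕ → Finset (List SStep)
  | 0 => {[]}
  | n + 1 => Finset.univ.biUnion fun s : SStep => (allLists n).image fun l => s :: l

/-- The (finite) set of Schröder paths from `(i,0)` to `(0,j)`, encoded as their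
lists of steps read from the starting point `(i,0)`. -/
def pathFinset (i j : ℕ) : Finset (List SStep) :=
  ((Finset.range (i + j + 1)).biUnion allLists).filter
    fun p => endPos ((i : ℤ), 0) p = (0, (j : ℤ))

/-- Number of diagonal steps of a path. -/
def diagCount (p : List SStep) : ℕ := p.count SStep.diag

/-- The partition function `Z_{(i,0)→(0,j)} = ∑_p γ^{k(p)} q^{A(p)}` of weighted
Schröder paths from `(i,0)` to `(0,j)`. -/
def Zpf {R : Type*} [CommRing R] (γ q : R) (i j : ℕ) : R :=
  ∑ p ∈ pathFinset i j, γ ^ diagCount p * q ^ (areaOf ((i : ℤ), 0) p).toNat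

/-- The `q²`-trinomial coefficient `[a+b+c; a,b,c]_{q²}`. -/
def qTrinom {K : Type*} [Field K] (q : K) (a b c : ℕ) : K :=
  (∏ s ∈ Finset.Icc 1 (a + b + c), (q ^ (2 * s) - 1)) /
    ((∏ s ∈ Finset.Icc 1 a, (q ^ (2 * s) - 1)) * (∏ s ∈ Finset.Icc 1 b, (q ^ (2 * s) - 1)) *
      (∏ s ∈ Finset.Icc 1 c, (q ^ (2 * s) - 1)))

/-!
Splitting a path according to its first step (up, left or diagonal) gives the recursion
`Z(i+1,j+1) = q^{2(i+1)} Z(i+1,j) + Z(i,j+1) + γ q^{2i+1} Z(i,j)`, with `Z(i,0) = Z(0,j) = 1`.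
The trinomial sum satisfies the same recursion term by term. Once `1 / ∏_{s=1}^{n} (q^{2s} - 1)`
is extended by zero to `n < 0`, the identity for the `k`-th term is the `q²`-trinomial Pascal rule,
which after clearing denominators is the telescoping identity
`q^{2(b+c)} (q^{2a} - 1) + q^{2c} (q^{2b} - 1) + (q^{2c} - 1) = q^{2(a+b+c)} - 1`.
-/

lemma mem_allLists {n : ℕ} {p : List SStep} : p ∈ allLists n ↔ p.length = n := by
  induction n generalizing p with
  | zero => simp [allLists]
  | succ n ih =>
    cases p with
    | nil => simp [allLists]
    | cons s t => simp [allLists, ih]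

lemma length_eq_count_add_count_add_count (p : List SStep) :
    p.length = p.count .up + p.count .left + p.count .diag := by
  induction p with
  | nil => rfl
  | cons s t ih => cases s <;> simp [ih] <;> omega

lemma endPos_eq (x y : ℤ) (p : List SStep) :
    endPos (x, y) p = (x - (p.count .left + p.count .diag), y + (p.count .up + p.count .diag)) := by
  induction p generalizing x y with
  | nil => simp [endPos]
  | cons s t ih =>
    cases s <;> simp only [endPos, stepMove, ih, List.count_cons] <;> simp <;> omega

lemma mem_pathFinset {i j : ℕ} {p : List SStep} :
    p ∈ pathFinset i j ↔
      p.count .left + p.count .diag = i ∧ p.count .up + p.count .diag = j := by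
  have hlen := length_eq_count_add_count_add_count p
  simp only [pathFinset, Finset.mem_filter, Finset.mem_biUnion, Finset.mem_range, mem_allLists,
    exists_eq_right', endPos_eq, Prod.mk.injEq]
  omega

lemma pathFinset_zero_zero : pathFinset 0 0 = {[]} := by
  ext p
  rcases p with _ | ⟨_ | _ | _, t⟩ <;> simp [mem_pathFinset]

lemma pathFinset_zero_succ (j : ℕ) :
    pathFinset 0 (j + 1) = (pathFinset 0 j).map ⟨List.cons .up, List.cons_injective⟩ := by
  ext p
  rcases p with _ | ⟨_ | _ | _, t⟩ <;> simp [mem_pathFinset]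
  omega

lemma pathFinset_succ_zero (i : ℕ) :
    pathFinset (i + 1) 0 = (pathFinset i 0).map ⟨List.cons .left, List.cons_injective⟩ := by
  ext p
  rcases p with _ | ⟨_ | _ | _, t⟩ <;> simp [mem_pathFinset]
  omega

lemma pathFinset_succ_succ (i j : ℕ) :
    pathFinset (i + 1) (j + 1) =
      (pathFinset (i + 1) j).map ⟨List.cons .up, List.cons_injective⟩ ∪
        (pathFinset i (j + 1)).map ⟨List.cons .left, List.cons_injective⟩ ∪
        (pathFinset i j).map ⟨List.cons .diag, List.cons_injective⟩ := by
  ext p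
  rcases p with _ | ⟨_ | _ | _, t⟩ <;> simp [mem_pathFinset] <;> omega

lemma areaOf_congr_snd (x y y' : ℤ) (p : List SStep) : areaOf (x, y) p = areaOf (x, y') p := by
  induction p generalizing x y y' with
  | nil => rfl
  | cons s t ih => cases s <;> simp only [areaOf, ih _ _ 0]

lemma areaOf_nonneg (x y : ℤ) (p : List SStep)
    (hx : (p.count .left + p.count .diag : ℤ) ≤ x) :
    0 ≤ areaOf (x, y) p := by
  induction p generalizing x y with
  | nil => rfl
  | cons s t ih =>
    cases s <;> simp only [areaOf, List.count_cons_self, ne_eq, reduceCtorEq, not_false_eq_true,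
      List.count_cons_of_ne, Nat.cast_add, Nat.cast_one] at hx ⊢
    · have := ih x (y + 1) hx; omega
    · exact ih _ _ (by omega)
    · have := ih (x - 1) (y + 1) (by omega); omega

section Weight

variable {R : Type*} [CommRing R] (γ q : R)

def pathWeight (x : ℕ) (p : List SStep) : R :=
  γ ^ diagCount p * q ^ (areaOf ((x : ℤ), 0) p).toNat

lemma Zpf_eq_sum_pathWeight (i j : ℕ) :
    Zpf γ q i j = ∑ p ∈ pathFinset i j, pathWeight γ q i p := rfl

variable {γ q}

lemma pathWeight_up {x : ℕ} {t : List SStep} (ht : t.count .left + t.count .diag ≤ x) :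
    pathWeight γ q x (.up :: t) = q ^ (2 * x) * pathWeight γ q x t := by
  have h := areaOf_nonneg x 0 t (by exact_mod_cast ht)
  have harea : (areaOf ((x : ℤ), 0) (.up :: t)).toNat = 2 * x + (areaOf (x, 0) t).toNat := by
    rw [areaOf, areaOf_congr_snd _ _ 0]; omega
  rw [pathWeight, pathWeight, harea, diagCount, diagCount,
    List.count_cons_of_ne (by decide), pow_add]
  ring

lemma pathWeight_left (x : ℕ) (t : List SStep) :
    pathWeight γ q (x + 1) (.left :: t) = pathWeight γ q x t := by
  simp [pathWeight, areaOf, diagCount]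

lemma pathWeight_diag {x : ℕ} {t : List SStep} (ht : t.count .left + t.count .diag ≤ x) :
    pathWeight γ q (x + 1) (.diag :: t) = γ * q ^ (2 * x + 1) * pathWeight γ q x t := by
  have h := areaOf_nonneg x 0 t (by exact_mod_cast ht)
  have harea : (areaOf (((x + 1 : ℕ) : ℤ), 0) (.diag :: t)).toNat
      = 2 * x + 1 + (areaOf (x, 0) t).toNat := by
    rw [areaOf, areaOf_congr_snd _ _ 0]; push_cast; rw [add_sub_cancel_right]; omega
  rw [pathWeight, pathWeight, harea, diagCount, diagCount, List.count_cons_self, pow_add,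
    pow_succ]
  ring

end Weight

lemma disjoint_map_cons {s s' : SStep} (h : s ≠ s') (A B : Finset (List SStep)) :
    Disjoint (A.map ⟨List.cons s, List.cons_injective⟩)
      (B.map ⟨List.cons s', List.cons_injective⟩) := by
  simp [Finset.disjoint_left, h.symm]

section Recursion

variable {R : Type*} [CommRing R] (γ q : R)

lemma Zpf_zero_left (j : ℕ) : Zpf γ q 0 j = 1 := by
  induction j with
  | zero => simp [Zpf_eq_sum_pathWeight, pathFinset_zero_zero, pathWeight, diagCount, areaOf]
  | succ j ih =>
    rw [← ih, Zpf_eq_sum_pathWeight, Zpf_eq_sum_pathWeight, pathFinset_zero_succ, Finset.sum_map]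
    refine Finset.sum_congr rfl fun t ht => ?_
    simpa using pathWeight_up (γ := γ) (q := q) (mem_pathFinset.mp ht).1.le

lemma Zpf_zero_right (i : ℕ) : Zpf γ q i 0 = 1 := by
  induction i with
  | zero => exact Zpf_zero_left γ q 0
  | succ i ih =>
    rw [← ih, Zpf_eq_sum_pathWeight, Zpf_eq_sum_pathWeight, pathFinset_succ_zero, Finset.sum_map]
    exact Finset.sum_congr rfl fun t _ => pathWeight_left i t

lemma Zpf_succ_succ (i j : ℕ) :
    Zpf γ q (i + 1) (j + 1) =
      q ^ (2 * (i + 1)) * Zpf γ q (i + 1) j + Zpf γ q i (j + 1)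
        + γ * q ^ (2 * i + 1) * Zpf γ q i j := by
  simp only [Zpf_eq_sum_pathWeight, pathFinset_succ_succ, Finset.mul_sum]
  rw [Finset.sum_union (Finset.disjoint_union_left.mpr
      ⟨disjoint_map_cons (by decide) _ _, disjoint_map_cons (by decide) _ _⟩),
    Finset.sum_union (disjoint_map_cons (by decide) _ _), Finset.sum_map, Finset.sum_map,
    Finset.sum_map]
  congr 1; congr 1
  · exact Finset.sum_congr rfl fun t ht => pathWeight_up (mem_pathFinset.mp ht).1.le
  · exact Finset.sum_congr rfl fun t _ => pathWeight_left i t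
  · exact Finset.sum_congr rfl fun t ht => pathWeight_diag (mem_pathFinset.mp ht).1.le

end Recursion

section QFactorial

variable {R : Type*} [CommRing R] (q : R)

def qFact (n : ℕ) : R := ∏ s ∈ Finset.Icc 1 n, (q ^ (2 * s) - 1)

@[simp]
lemma qFact_zero : qFact q 0 = 1 := rfl

lemma qFact_succ (n : ℕ) : qFact q (n + 1) = qFact q n * (q ^ (2 * (n + 1)) - 1) :=
  Finset.prod_Icc_succ_top (by omega) _

lemma qFact_dvd_qFact {m n : ℕ} (h : m ≤ n) : qFact q m ∣ qFact q n :=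
  Finset.prod_dvd_prod_of_subset _ _ _ (Finset.Icc_subset_Icc_right h)

end QFactorial

section Trinomial

variable {K : Type*} [Field K] (γ q : K)

lemma qFact_ne_zero_of_le {m n : ℕ} (h : m ≤ n) (hn : qFact q n ≠ 0) : qFact q m ≠ 0 :=
  ne_zero_of_dvd_ne_zero hn (qFact_dvd_qFact q h)

lemma qFact_ne_zero {n : ℕ} (hq : ∀ s : ℕ, 1 ≤ s → s ≤ n → q ^ (2 * s) ≠ 1) :
    qFact q n ≠ 0 :=
  Finset.prod_ne_zero_iff.mpr fun s hs =>
    sub_ne_zero.mpr (hq s (Finset.mem_Icc.mp hs).1 (Finset.mem_Icc.mp hs).2)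

lemma qTrinom_eq_qFact (a b c : ℕ) :
    qTrinom q a b c = qFact q (a + b + c) / (qFact q a * qFact q b * qFact q c) := rfl

/-- `(qFact q n)⁻¹`, extended by zero to negative `n`, so that the terms of the trinomial sum
vanish outside `0 ≤ k ≤ min i j` and all sums can be taken over a common range. -/
def qInvFact (n : ℤ) : K := if 0 ≤ n then (qFact q n.toNat)⁻¹ else 0

lemma qInvFact_natCast (n : ℕ) : qInvFact q n = (qFact q n)⁻¹ := by simp [qInvFact]

@[simp]
lemma qInvFact_zero : qInvFact q 0 = 1 := by simp [qInvFact]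

lemma qInvFact_of_neg {n : ℤ} (h : n < 0) : qInvFact q n = 0 := by simp [qInvFact, h.not_ge]

lemma qInvFact_sub_one {n : ℕ} (h : qFact q n ≠ 0) :
    qInvFact q (n - 1) = (q ^ (2 * n) - 1) * qInvFact q n := by
  rcases n with _ | n
  · simp [qInvFact_of_neg]
  · rw [qFact_succ] at h
    rw [Nat.cast_add_one, add_sub_cancel_right, ← Nat.cast_add_one, qInvFact_natCast,
      qInvFact_natCast, qFact_succ, mul_inv, mul_left_comm,
      mul_inv_cancel₀ (right_ne_zero_of_mul h), mul_one]

def trinomialTerm (i j k : ℕ) : K :=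
  γ ^ k * q ^ (k ^ 2) * qFact q (i + j - k) * qInvFact q ((j : ℤ) - k) * qInvFact q k *
    qInvFact q ((i : ℤ) - k)

variable {γ q}

lemma trinomialTerm_of_lt {i j k : ℕ} (h : i < k ∨ j < k) : trinomialTerm γ q i j k = 0 := by
  rcases h with h | h
  · simp [trinomialTerm, qInvFact_of_neg q (show (i : ℤ) - k < 0 by omega)]
  · simp [trinomialTerm, qInvFact_of_neg q (show (j : ℤ) - k < 0 by omega)]

lemma trinomialTerm_eq_qTrinom {i j k : ℕ} (hi : k ≤ i) (hj : k ≤ j) :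
    trinomialTerm γ q i j k = γ ^ k * q ^ (k ^ 2) * qTrinom q (j - k) k (i - k) := by
  rw [trinomialTerm, ← Nat.cast_sub hj, ← Nat.cast_sub hi, qInvFact_natCast, qInvFact_natCast,
    qInvFact_natCast, qTrinom_eq_qFact, show j - k + k + (i - k) = i + j - k by omega,
    div_eq_mul_inv, mul_inv, mul_inv]
  ring

lemma trinomialTerm_succ_succ_zero {i j : ℕ} (h : qFact q (i + j + 2) ≠ 0) :
    trinomialTerm γ q (i + 1) (j + 1) 0 =
      q ^ (2 * (i + 1)) * trinomialTerm γ q (i + 1) j 0 + trinomialTerm γ q i (j + 1) 0 := by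
  have hi := qInvFact_sub_one q (qFact_ne_zero_of_le q (show i + 1 ≤ i + j + 2 by omega) h)
  have hj := qInvFact_sub_one q (qFact_ne_zero_of_le q (show j + 1 ≤ i + j + 2 by omega) h)
  push_cast at hi hj
  rw [add_sub_cancel_right] at hi hj
  simp only [trinomialTerm, Nat.cast_zero, sub_zero, Nat.sub_zero, pow_zero, qInvFact_zero,
    mul_one, one_mul, Nat.cast_add_one]
  rw [show i + 1 + (j + 1) = i + j + 1 + 1 by omega, show i + 1 + j = i + j + 1 by omega,
    show i + (j + 1) = i + j + 1 by omega, qFact_succ, hi, hj]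
  ring

lemma trinomialTerm_succ_succ_succ {i j k : ℕ} (h : qFact q (i + j + 2) ≠ 0) :
    trinomialTerm γ q (i + 1) (j + 1) (k + 1) =
      q ^ (2 * (i + 1)) * trinomialTerm γ q (i + 1) j (k + 1)
        + trinomialTerm γ q i (j + 1) (k + 1)
        + γ * q ^ (2 * i + 1) * trinomialTerm γ q i j k := by
  by_cases hk : k ≤ i ∧ k ≤ j
  swap
  · simp only [trinomialTerm_of_lt (by omega : i + 1 < k + 1 ∨ j + 1 < k + 1),
      trinomialTerm_of_lt (by omega : i + 1 < k + 1 ∨ j < k + 1),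
      trinomialTerm_of_lt (by omega : i < k + 1 ∨ j + 1 < k + 1),
      trinomialTerm_of_lt (by omega : i < k ∨ j < k)]
    ring
  obtain ⟨c, rfl⟩ := Nat.exists_eq_add_of_le hk.1
  obtain ⟨a, rfl⟩ := Nat.exists_eq_add_of_le hk.2
  have hP : ∀ m, m ≤ a + c + k + 1 → qFact q m ≠ 0 := fun m hm =>
    qFact_ne_zero_of_le q (by omega) h
  have ha := qInvFact_sub_one q (hP a (by omega))
  have hc := qInvFact_sub_one q (hP c (by omega))
  have hk1 := qInvFact_sub_one q (hP (k + 1) (by omega))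
  rw [Nat.cast_add_one, add_sub_cancel_right] at hk1
  simp only [trinomialTerm, Nat.cast_add, Nat.cast_one, add_sub_add_right_eq_sub,
    add_sub_add_left_eq_sub, add_sub_cancel_left, ha, hc]
  rw [show k + c + 1 + (k + a + 1) - (k + 1) = a + c + k + 1 by omega,
    show k + c + 1 + (k + a) - (k + 1) = a + c + k by omega,
    show k + c + (k + a + 1) - (k + 1) = a + c + k by omega,
    show k + c + (k + a) - k = a + c + k by omega, qFact_succ, hk1]
  ring

lemma sum_trinomialTerm_zero_left {j : ℕ} (hj : qFact q j ≠ 0) :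
    ∑ k ∈ Finset.range (0 + 1), trinomialTerm γ q 0 j k = 1 := by
  simp [trinomialTerm, qInvFact_natCast, hj]

lemma sum_trinomialTerm_zero_right {i : ℕ} (hi : qFact q i ≠ 0) :
    ∑ k ∈ Finset.range (i + 1), trinomialTerm γ q i 0 k = 1 := by
  rw [Finset.sum_range_succ', Finset.sum_eq_zero fun k _ => trinomialTerm_of_lt (by omega)]
  simp [trinomialTerm, qInvFact_natCast, hi]

lemma sum_trinomialTerm_succ_succ {i j : ℕ} (h : qFact q (i + j + 2) ≠ 0) :
    ∑ k ∈ Finset.range (i + 1 + 1), trinomialTerm γ q (i + 1) (j + 1) k =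
      q ^ (2 * (i + 1)) * ∑ k ∈ Finset.range (i + 1 + 1), trinomialTerm γ q (i + 1) j k
        + ∑ k ∈ Finset.range (i + 1), trinomialTerm γ q i (j + 1) k
        + γ * q ^ (2 * i + 1) * ∑ k ∈ Finset.range (i + 1), trinomialTerm γ q i j k := by
  have hlast : trinomialTerm γ q i (j + 1) (i + 1) = 0 := trinomialTerm_of_lt (by omega)
  rw [← add_zero (∑ k ∈ Finset.range (i + 1), trinomialTerm γ q i (j + 1) k), ← hlast,
    ← Finset.sum_range_succ, Finset.sum_range_succ' (trinomialTerm γ q (i + 1) (j + 1)),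
    Finset.sum_range_succ' (trinomialTerm γ q (i + 1) j),
    Finset.sum_range_succ' (trinomialTerm γ q i (j + 1))]
  simp only [trinomialTerm_succ_succ_succ h, trinomialTerm_succ_succ_zero h,
    Finset.sum_add_distrib, Finset.mul_sum, mul_add]
  ring

end Trinomial

lemma Zpf_eq_sum_trinomialTerm {K : Type*} [Field K] (γ q : K) (i j : ℕ)
    (h : qFact q (i + j) ≠ 0) :
    Zpf γ q i j = ∑ k ∈ Finset.range (i + 1), trinomialTerm γ q i j k := by
  induction i generalizing j with
  | zero => rw [Zpf_zero_left, sum_trinomialTerm_zero_left (by simpa using h)]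
  | succ i ihi =>
    induction j with
    | zero => rw [Zpf_zero_right, sum_trinomialTerm_zero_right h]
    | succ j ihj =>
      have hP : ∀ m, m ≤ i + j + 2 → qFact q m ≠ 0 := fun m hm =>
        qFact_ne_zero_of_le q (by omega) h
      rw [Zpf_succ_succ, sum_trinomialTerm_succ_succ (hP _ le_rfl), ihj (hP _ (by omega)),
        ihi j (hP _ (by omega)), ihi (j + 1) (hP _ (by omega))]

lemma sum_qTrinom_eq_sum_trinomialTerm {K : Type*} [Field K] (γ q : K) (i j : ℕ) :
    ∑ k ∈ Finset.range (Nat.min i j + 1), γ ^ k * q ^ (k ^ 2) * qTrinom q (j - k) k (i - k) =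
      ∑ k ∈ Finset.range (i + 1), trinomialTerm γ q i j k := by
  have hmin : Nat.min i j = min i j := rfl
  have hrange : Nat.min i j + 1 ≤ i + 1 := by omega
  rw [← Finset.sum_subset (Finset.range_subset_range.mpr hrange) fun k _ hk =>
    trinomialTerm_of_lt (by rw [Finset.mem_range] at hk; omega)]
  refine Finset.sum_congr rfl fun k hk => ?_
  have hk' := Finset.mem_range.mp hk
  exact (trinomialTerm_eq_qTrinom (by omega) (by omega)).symm

/-- Summation formula for the weighted Schröder path partition function:
`Z_{(i,0)→(0,j)} = ∑_{k=0}^{min(i,j)} γ^k q^{k²} [i+j-k; j-k,k,i-k]_{q²}`. -/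
theorem schroeder_partition_function_trinomial_sum {K : Type*} [Field K] (γ q : K) (i j : ℕ)
    (hq : ∀ s : ℕ, 1 ≤ s → s ≤ i + j → q ^ (2 * s) ≠ 1) :
    Zpf γ q i j =
      ∑ k ∈ Finset.range (Nat.min i j + 1), γ ^ k * q ^ (k ^ 2) * qTrinom q (j - k) k (i - k) := by
  rw [Zpf_eq_sum_trinomialTerm γ q i j (qFact_ne_zero q hq), sum_qTrinom_eq_sum_trinomialTerm]
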